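/- The function f_4 defined on the unit disk by f_4(z) = ∫₀^z (1 + tanh(t⁴))^{1/2} dt belongs to the class BT_B, and its fourth logarithmic coefficient γ_4 = (1/2)(a_5 − a_2·a_4 + a_2²·a_3 − a_3²/2 − a_2⁴/4) satisfies |γ_4| = 1/20 (its Taylor coefficients satisfy a_2 = a_3 = a_4 = 0 and a_5 = 1/10). Hence the bound |γ_4| ≤ 1/20 for the class BT_B is sharp. -/

import Mathlib

open Complex Metric

/-- Principal branch of the square root: `w^(1/2) = exp((1/2) * Log w)`. -/
noncomputable def psqrt (w : ℂ) : ℂ := Complex.exp ((1/2 : ℂ) * Complex.log w)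

/-- The `n`-th Taylor coefficient of `f` at `0`, i.e. `f^(n)(0)/n!`. -/
noncomputable def tCoeff (f : ℂ → ℂ) (n : ℕ) : ℂ := iteratedDeriv n f 0 / n.factorial

/-- The class `BT_B` of bounded turning functions associated with the bean-shaped domain:
`f` is analytic on the unit disk, `f 0 = 0`, `f' 0 = 1`, `f` injective on the disk,
and `f'(z) = (1 + tanh (ω z))^(1/2)` for a Schwarz function `ω`. -/
def IsBTB (f : ℂ → ℂ) : Prop :=
  AnalyticOnNhd ℂ f (ball 0 1) ∧ f 0 = 0 ∧ deriv f 0 = 1 ∧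
  Set.InjOn f (ball 0 1) ∧
  ∃ ω : ℂ → ℂ, AnalyticOnNhd ℂ ω (ball 0 1) ∧ ω 0 = 0 ∧
    (∀ z ∈ ball (0:ℂ) 1, ‖ω z‖ < 1) ∧
    (∀ z ∈ ball (0:ℂ) 1, deriv f z = psqrt (1 + Complex.tanh (ω z)))

noncomputable def f₄ (z : ℂ) : ℂ :=
  ∫ t in (0:ℝ)..1, z * psqrt (1 + Complex.tanh (((t : ℂ) * z)^4))

/-!
Write `φ w = (1 + tanh w)^(1/2)`. For `|Im w| < π/2` one has `1 + tanh w = 2 / (1 + e^(-2w))`,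
which lies in the slit plane, so `φ` is analytic there with `Re φ > 0`. If `P` is a primitive of
`z ↦ φ (z⁴)` on the disc (Morera) with `P 0 = 0`, then `t ↦ P (t z)` has derivative the integrand
of `f₄`, so `f₄ = P`. Hence `f₄' = φ (z⁴)` with Schwarz function `z⁴`, and `Re f₄' > 0` on the
convex disc makes `f₄` injective (Noshiro–Warschawski). Finally `f₄'' z = 4 z³ φ' (z⁴)` vanishes to
order three at `0`, so `a₂ = a₃ = a₄ = 0` and `a₅ = 4! φ' 0 / 5! = 1/10`, whence `γ₄ = a₅ / 2`.
-/

open Filter Topology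
open scoped Nat Real

section IteratedDeriv

variable {𝕜 : Type*} [NontriviallyNormedField 𝕜]

theorem iteratedDeriv_pow_mul_zero {K : 𝕜 → 𝕜} {m n : ℕ} (hnm : n ≤ m)
    (hK : ContDiffAt 𝕜 n K 0) :
    iteratedDeriv n (fun z => z ^ m * K z) 0 = if n = m then (m ! : 𝕜) * K 0 else 0 := by
  rw [iteratedDeriv_fun_mul (by fun_prop) hK, Finset.sum_eq_single n]
  · simp only [iteratedDeriv_fun_pow_zero]
    split_ifs <;> simp
  · intro i hi hin
    have : i ≠ m := by have := Finset.mem_range.1 hi; omega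
    simp only [iteratedDeriv_fun_pow_zero, this, if_false]
    simp
  · simp

theorem iteratedDeriv_succ_comp_pow_zero [CompleteSpace 𝕜] {G : 𝕜 → 𝕜} (hG : AnalyticAt 𝕜 G 0)
    {m n : ℕ} (hnm : n < m) :
    iteratedDeriv (n + 1) (fun z => G (z ^ m)) 0 =
      if n + 1 = m then (m ! : 𝕜) * deriv G 0 else 0 := by
  obtain ⟨m, rfl⟩ : ∃ k, m = k + 1 := ⟨m - 1, by omega⟩
  have hderiv : deriv (fun z => G (z ^ (m + 1))) =ᶠ[𝓝 0]
      fun z => z ^ m * ((m + 1 : 𝕜) * deriv G (z ^ (m + 1))) := by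
    have hpow : Tendsto (fun z : 𝕜 => z ^ (m + 1)) (𝓝 0) (𝓝 0) := by
      simpa using (continuous_pow (m + 1)).tendsto (0 : 𝕜)
    filter_upwards [hpow.eventually hG.eventually_analyticAt] with z hz
    rw [HasDerivAt.deriv (f := fun z => G (z ^ (m + 1)))
      (hz.differentiableAt.hasDerivAt.comp z (hasDerivAt_pow (m + 1) z))]
    push_cast
    ring
  have hK : AnalyticAt 𝕜 (fun z => (m + 1 : 𝕜) * deriv G (z ^ (m + 1))) 0 :=
    analyticAt_const.mul (hG.deriv.comp_of_eq (by fun_prop) (by simp))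
  rw [iteratedDeriv_succ', hderiv.iteratedDeriv_eq,
    iteratedDeriv_pow_mul_zero (by omega) hK.contDiffAt]
  simp only [add_left_inj, Nat.factorial_succ]
  push_cast
  split_ifs <;> simp [mul_comm, mul_left_comm]

end IteratedDeriv

theorem Convex.injOn_of_hasDerivAt_of_re_pos {s : Set ℂ} (hs : Convex ℝ s) {f f' : ℂ → ℂ}
    (hf : ∀ z ∈ s, HasDerivAt f (f' z) z) (hre : ∀ z ∈ s, 0 < (f' z).re) : Set.InjOn f s := by
  intro a ha b hb hab
  by_contra hne
  have hba : b - a ≠ 0 := sub_ne_zero.2 (Ne.symm hne)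
  have hγ : ∀ t ∈ Set.Icc (0:ℝ) 1, a + t * (b - a) ∈ s := fun t ht => by
    simpa [Complex.real_smul] using hs.add_smul_sub_mem ha hb ht
  have hφ : ∀ t ∈ Set.Icc (0:ℝ) 1, HasDerivAt (fun t : ℝ => (f (a + t * (b - a)) / (b - a)).re)
      (f' (a + t * (b - a))).re t := by
    intro t ht
    have hpath : HasDerivAt (fun u : ℂ => a + u * (b - a)) (b - a) t := by
      simpa using ((hasDerivAt_id (t : ℂ)).mul_const (b - a)).const_add a
    have := (((hf _ (hγ t ht)).comp (t : ℂ) hpath).div_const (b - a)).comp_ofReal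
    rw [mul_div_cancel_right₀ _ hba] at this
    exact reCLM.hasFDerivAt.comp_hasDerivAt t this
  obtain ⟨c, hc, hslope⟩ := exists_hasDerivAt_eq_slope _ _ zero_lt_one
    (fun t ht => (hφ t ht).continuousAt.continuousWithinAt)
    (fun t ht => hφ t (Set.Ioo_subset_Icc_self ht))
  have hzero : (f' (a + c * (b - a))).re = 0 := by simpa [hab] using hslope
  exact (hre _ (hγ c (Set.Ioo_subset_Icc_self hc))).ne' hzero

theorem hasDerivAt_integral_mul_comp_ofReal_mul {g : ℂ → ℂ} {R : ℝ}
    (hg : DifferentiableOn ℂ g (ball 0 R)) {z : ℂ} (hz : z ∈ ball 0 R) :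
    HasDerivAt (fun w => ∫ t in (0:ℝ)..1, w * g (t * w)) (g z) z := by
  obtain ⟨P, hP0, hP⟩ := hg.isExactOn_ball.with_val_at 0 0
  have hseg : ∀ w ∈ ball (0:ℂ) R, ∀ t ∈ Set.uIcc (0:ℝ) 1, (t : ℂ) * w ∈ ball (0:ℂ) R := by
    intro w hw t ht
    rw [Set.uIcc_of_le zero_le_one] at ht
    rw [mem_ball_zero_iff] at hw ⊢
    rw [norm_mul, norm_real, Real.norm_of_nonneg ht.1]
    nlinarith [norm_nonneg w, ht.2]
  have hprim : ∀ w ∈ ball (0:ℂ) R, ∫ t in (0:ℝ)..1, w * g (t * w) = P w := by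
    intro w hw
    have hderiv : ∀ t ∈ Set.uIcc (0:ℝ) 1,
        HasDerivAt (fun t : ℝ => P (t * w)) (w * g (t * w)) t := by
      intro t ht
      have := (hP _ (hseg w hw t ht)).comp (t : ℂ) ((hasDerivAt_id (t : ℂ)).mul_const w)
      simpa [mul_comm] using this.comp_ofReal
    have hcont : ContinuousOn (fun t : ℝ => w * g (t * w)) (Set.uIcc 0 1) :=
      continuousOn_const.mul (hg.continuousOn.comp (by fun_prop) (hseg w hw))
    rw [intervalIntegral.integral_eq_sub_of_hasDerivAt hderiv hcont.intervalIntegrable]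
    simp [hP0]
  exact (hP z hz).congr_of_eventuallyEq
    (Filter.eventually_of_mem (isOpen_ball.mem_nhds hz) hprim)

theorem Complex.cosh_ne_zero_of_abs_im_lt {w : ℂ} (hw : |w.im| < π / 2) : cosh w ≠ 0 := by
  rw [← cos_mul_I, cos_ne_zero_iff]
  intro k hk
  have him : -w.im = (2 * k + 1) * π / 2 := by
    simpa using congrArg re hk
  have hk1 : (1 : ℝ) ≤ |2 * (k : ℝ) + 1| := by
    exact_mod_cast Int.one_le_abs (by omega : 2 * k + 1 ≠ 0)
  rw [← abs_neg, him, abs_div, abs_mul, abs_of_pos Real.pi_pos, abs_two] at hw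
  nlinarith [Real.pi_pos]

theorem Complex.inv_mem_slitPlane {z : ℂ} (hz : z ∈ slitPlane) : z⁻¹ ∈ slitPlane := by
  have hn : 0 < normSq z := normSq_pos.2 (slitPlane_ne_zero hz)
  rw [mem_slitPlane_iff] at hz ⊢
  rw [inv_re, inv_im]
  rcases hz with h | h
  · exact Or.inl (div_pos h hn)
  · exact Or.inr (div_ne_zero (neg_ne_zero.2 h) hn.ne')

theorem Complex.one_add_tanh_eq_inv {w : ℂ} (hc : cosh w ≠ 0) :
    1 + tanh w = ((1 + exp (-2 * w)) / 2)⁻¹ := by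
  have h2 : exp (-2 * w) = (exp w)⁻¹ ^ 2 := by rw [← exp_neg, ← exp_nat_mul]; ring_nf
  rw [tanh_eq_sinh_div_cosh, h2]
  rw [cosh, exp_neg] at hc
  rw [cosh, sinh, exp_neg]
  have hE := exp_ne_zero w
  have h1 : exp w ^ 2 + 1 ≠ 0 := by
    contrapose! hc; field_simp; linear_combination hc
  field_simp
  ring

theorem Complex.one_add_tanh_mem_slitPlane {w : ℂ} (hw : |w.im| < π / 2) :
    1 + tanh w ∈ slitPlane := by
  rw [one_add_tanh_eq_inv (cosh_ne_zero_of_abs_im_lt hw)]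
  refine inv_mem_slitPlane (mem_slitPlane_iff.2 ?_)
  have hre : ((1 + exp (-2 * w)) / 2).re =
      (1 + Real.exp (-2 * w.re) * Real.cos (2 * w.im)) / 2 := by simp [exp_re]
  have him : ((1 + exp (-2 * w)) / 2).im =
      -(Real.exp (-2 * w.re) * Real.sin (2 * w.im)) / 2 := by simp [exp_im]
  rw [hre, him]
  by_cases hy : w.im = 0
  · left
    rw [hy, mul_zero, Real.cos_zero, mul_one]
    positivity
  · right
    have hsin : Real.sin (2 * w.im) ≠ 0 := by
      rw [Ne, Real.sin_eq_zero_iff_of_lt_of_lt (by linarith [abs_lt.1 hw])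
        (by linarith [abs_lt.1 hw])]
      exact mul_ne_zero two_ne_zero hy
    exact div_ne_zero (neg_ne_zero.2 (mul_ne_zero (Real.exp_pos _).ne' hsin)) two_ne_zero

theorem psqrt_one : psqrt 1 = 1 := by simp [psqrt]

theorem analyticAt_psqrt {u : ℂ} (hu : u ∈ slitPlane) : AnalyticAt ℂ psqrt u :=
  (analyticAt_const.mul (analyticAt_clog hu)).cexp

theorem hasDerivAt_psqrt {u : ℂ} (hu : u ∈ slitPlane) :
    HasDerivAt psqrt (psqrt u / (2 * u)) u := by
  refine (((hasDerivAt_log hu).const_mul (1 / 2 : ℂ)).cexp).congr_deriv ?_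
  rw [psqrt]
  field_simp

theorem re_psqrt_pos {u : ℂ} (hu : u ∈ slitPlane) : 0 < (psqrt u).re := by
  have harg : u.arg < π := lt_of_le_of_ne (arg_le_pi u) (slitPlane_arg_ne_pi hu)
  have him : ((1 / 2 : ℂ) * log u).im = u.arg / 2 := by simp [log_im, div_eq_inv_mul]
  rw [psqrt, exp_re, him]
  exact mul_pos (Real.exp_pos _)
    (Real.cos_pos_of_mem_Ioo ⟨by linarith [neg_pi_lt_arg u], by linarith⟩)

noncomputable def sqrtOneAddTanh (w : ℂ) : ℂ := psqrt (1 + tanh w)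

theorem analyticAt_sqrtOneAddTanh {w : ℂ} (hw : |w.im| < π / 2) :
    AnalyticAt ℂ sqrtOneAddTanh w := by
  have htanh : AnalyticAt ℂ tanh w := by
    rw [show tanh = sinh / cosh from funext tanh_eq_sinh_div_cosh]
    exact analyticAt_sinh.div analyticAt_cosh (cosh_ne_zero_of_abs_im_lt hw)
  exact (analyticAt_psqrt (one_add_tanh_mem_slitPlane hw)).comp (f := fun x => 1 + tanh x)
    (analyticAt_const.add htanh)

theorem sqrtOneAddTanh_zero : sqrtOneAddTanh 0 = 1 := by
  simp [sqrtOneAddTanh, psqrt_one]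

theorem deriv_sqrtOneAddTanh_zero : deriv sqrtOneAddTanh 0 = 1 / 2 := by
  have htanh : HasDerivAt tanh 1 0 := by
    rw [show tanh = sinh / cosh from funext tanh_eq_sinh_div_cosh]
    simpa using (hasDerivAt_sinh 0).div (hasDerivAt_cosh 0) (by simp)
  have := (hasDerivAt_psqrt (by simp : 1 + tanh 0 ∈ slitPlane)).comp 0 (htanh.const_add 1)
  simpa [psqrt_one] using HasDerivAt.deriv (f := sqrtOneAddTanh) this

theorem norm_pow_lt_one_of_mem_ball {z : ℂ} (hz : z ∈ ball (0 : ℂ) 1) {n : ℕ} (hn : n ≠ 0) :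
    ‖z ^ n‖ < 1 := by
  rw [norm_pow]
  exact pow_lt_one₀ (norm_nonneg z) (mem_ball_zero_iff.1 hz) hn

theorem abs_im_lt_pi_div_two_of_norm_lt_one {w : ℂ} (hw : ‖w‖ < 1) : |w.im| < π / 2 := by
  linarith [abs_im_le_norm w, Real.pi_gt_three]

theorem hasDerivAt_f₄ {z : ℂ} (hz : z ∈ ball (0 : ℂ) 1) :
    HasDerivAt f₄ (sqrtOneAddTanh (z ^ 4)) z := by
  refine hasDerivAt_integral_mul_comp_ofReal_mul (g := fun u => sqrtOneAddTanh (u ^ 4))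
    (fun u hu => ?_) hz
  exact ((analyticAt_sqrtOneAddTanh (abs_im_lt_pi_div_two_of_norm_lt_one
    (norm_pow_lt_one_of_mem_ball hu four_ne_zero))).comp
    (f := fun u : ℂ => u ^ 4) (by fun_prop)).differentiableAt.differentiableWithinAt

theorem isBTB_f₄ : IsBTB f₄ := by
  refine ⟨?_, by simp [f₄], ?_, ?_, fun z => z ^ 4, fun z _ => by fun_prop, by simp, ?_, ?_⟩
  · exact DifferentiableOn.analyticOnNhd
      (fun z hz => (hasDerivAt_f₄ hz).differentiableAt.differentiableWithinAt) isOpen_ball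
  · rw [(hasDerivAt_f₄ (mem_ball_self one_pos)).deriv]
    simpa using sqrtOneAddTanh_zero
  · exact (convex_ball 0 1).injOn_of_hasDerivAt_of_re_pos (fun z hz => hasDerivAt_f₄ hz)
      fun z hz => re_psqrt_pos (one_add_tanh_mem_slitPlane (abs_im_lt_pi_div_two_of_norm_lt_one
        (norm_pow_lt_one_of_mem_ball hz four_ne_zero)))
  · exact fun z hz => norm_pow_lt_one_of_mem_ball hz four_ne_zero
  · exact fun z hz => (hasDerivAt_f₄ hz).deriv

theorem tCoeff_f₄ {n : ℕ} (h2 : 2 ≤ n) (h5 : n ≤ 5) :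
    tCoeff f₄ n = if n = 5 then 1 / 10 else 0 := by
  obtain ⟨k, rfl⟩ : ∃ k, n = k + 2 := ⟨n - 2, by omega⟩
  have hk : k ≤ 3 := by omega
  have hderiv : deriv f₄ =ᶠ[𝓝 0] fun z => sqrtOneAddTanh (z ^ 4) :=
    Filter.eventually_of_mem (isOpen_ball.mem_nhds (mem_ball_self one_pos))
      fun z hz => (hasDerivAt_f₄ hz).deriv
  have hG := analyticAt_sqrtOneAddTanh (abs_im_lt_pi_div_two_of_norm_lt_one (w := 0) (by simp))
  rw [tCoeff, iteratedDeriv_succ', hderiv.iteratedDeriv_eq,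
    iteratedDeriv_succ_comp_pow_zero hG (by omega), deriv_sqrtOneAddTanh_zero]
  interval_cases k <;> norm_num [Nat.factorial]

theorem BTB_gamma4_sharp :
    IsBTB f₄ ∧ tCoeff f₄ 2 = 0 ∧ tCoeff f₄ 3 = 0 ∧ tCoeff f₄ 4 = 0 ∧ tCoeff f₄ 5 = 1/10 ∧
      ‖(1/2) * (tCoeff f₄ 5 - tCoeff f₄ 2 * tCoeff f₄ 4
        + (tCoeff f₄ 2)^2 * tCoeff f₄ 3 - (tCoeff f₄ 3)^2 / 2 - (tCoeff f₄ 2)^4 / 4)‖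
        = 1/20 := by
  have h2 : tCoeff f₄ 2 = 0 := by simpa using tCoeff_f₄ (n := 2) le_rfl (by norm_num)
  have h3 : tCoeff f₄ 3 = 0 := by simpa using tCoeff_f₄ (n := 3) (by norm_num) (by norm_num)
  have h4 : tCoeff f₄ 4 = 0 := by simpa using tCoeff_f₄ (n := 4) (by norm_num) (by norm_num)
  have h5 : tCoeff f₄ 5 = 1 / 10 := by simpa using tCoeff_f₄ (n := 5) (by norm_num) le_rfl
  refine ⟨isBTB_f₄, h2, h3, h4, h5, ?_⟩
  rw [h2, h3, h4, h5]
  norm_num
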